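/- Let F be a field of characteristic 0 and let φ ∈ F[x,y,z] be a homogeneous polynomial of odd degree 2n+1 satisfying -2y·φ_x + z·φ_y = 0. Then z divides φ, i.e., φ = z·ψ for some homogeneous polynomial ψ of degree 2n which also satisfies -2y·ψ_x + z·ψ_y = 0. -/

import Mathlib

/-!
With `x, y, z = X 0, X 1, X 2`, write `c(a, b, k)` for the coefficient of `x^a y^b z^k` in `φ`.
Comparing coefficients in `z φ_y = 2 y φ_x` gives the recurrence
`(b + 2) c(a, b+2, k) = 2 (a + 1) c(a+1, b, k+1)` and the boundary cases `c(a+1, b, 0) = 0`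
(no `z` on the left) and `c(a, 1, k) = 0` (no `y` on the right). Climbing the recurrence from
`c(j, 1, j) = 0` gives `c(j, 2i+1, j) = 0`, so `c(0, 2n+1, 0) = 0`. Hence every `z`-free monomial
of degree `2n + 1` has coefficient `0`, and `z ∣ φ`. Since the operator kills `z`, the quotient
satisfies the same equation.
-/

open MvPolynomial

namespace MvPolynomial

variable {σ R : Type*} [CommSemiring R]

theorem X_dvd_of_forall_coeff_eq_zero {i : σ} {p : MvPolynomial σ R}
    (h : ∀ d : σ →₀ ℕ, d i = 0 → coeff d p = 0) : X i ∣ p := by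
  rw [X_dvd_iff_modMonomial_eq_zero, eq_zero_iff]
  intro d
  by_cases hd : Finsupp.single i 1 ≤ d
  · exact coeff_modMonomial_of_le _ hd
  · rw [coeff_modMonomial_of_not_le _ hd]
    exact h d (by simpa [Finsupp.single_le_iff] using hd)

theorem IsHomogeneous.of_X_mul {i : σ} {p : MvPolynomial σ R} {n : ℕ}
    (h : (X i * p).IsHomogeneous (n + 1)) : p.IsHomogeneous n := by
  intro d hd
  have := h (d := Finsupp.single i 1 + d) (by rwa [coeff_X_mul])
  rw [map_add, Finsupp.weight_single, Pi.one_apply, smul_eq_mul, mul_one, add_comm] at this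
  exact Nat.succ_injective this

theorem coeff_X_mul_of_apply_eq_zero {i : σ} {m : σ →₀ ℕ} (p : MvPolynomial σ R)
    (hm : m i = 0) : coeff m (X i * p) = 0 := by
  classical
  simp [coeff_X_mul', hm]

end MvPolynomial

noncomputable def xyzExp (a b c : ℕ) : Fin 3 →₀ ℕ :=
  Finsupp.single 0 a + Finsupp.single 1 b + Finsupp.single 2 c

section xyzExp

variable (a b c : ℕ)

@[simp] theorem xyzExp_apply_zero : xyzExp a b c 0 = a := by simp [xyzExp]
@[simp] theorem xyzExp_apply_one : xyzExp a b c 1 = b := by simp [xyzExp]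
@[simp] theorem xyzExp_apply_two : xyzExp a b c 2 = c := by simp [xyzExp]

@[simp] theorem degree_xyzExp : (xyzExp a b c).degree = a + b + c := by
  simp [xyzExp]

theorem xyzExp_apply_self (m : Fin 3 →₀ ℕ) : xyzExp (m 0) (m 1) (m 2) = m := by
  ext j; fin_cases j <;> simp

theorem xyzExp_add_single_zero : xyzExp a b c + Finsupp.single 0 1 = xyzExp (a + 1) b c := by
  ext j; fin_cases j <;> simp

theorem xyzExp_add_single_one : xyzExp a b c + Finsupp.single 1 1 = xyzExp a (b + 1) c := by
  ext j; fin_cases j <;> simp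

theorem single_one_add_xyzExp : Finsupp.single 1 1 + xyzExp a b c = xyzExp a (b + 1) c := by
  rw [add_comm, xyzExp_add_single_one]

theorem single_two_add_xyzExp : Finsupp.single 2 1 + xyzExp a b c = xyzExp a b (c + 1) := by
  ext j; fin_cases j <;> simp [add_comm]

variable {R : Type*} [CommSemiring R] (p : MvPolynomial (Fin 3) R)

theorem coeff_xyzExp_X_one_mul_pderiv_zero :
    coeff (xyzExp a (b + 1) c) (X 1 * pderiv 0 p) = coeff (xyzExp (a + 1) b c) p * (a + 1) := by
  rw [← single_one_add_xyzExp, coeff_X_mul, coeff_pderiv, xyzExp_add_single_zero,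
    xyzExp_apply_zero]

theorem coeff_xyzExp_X_two_mul_pderiv_one :
    coeff (xyzExp a b (c + 1)) (X 2 * pderiv 1 p) = coeff (xyzExp a (b + 1) c) p * (b + 1) := by
  rw [← single_two_add_xyzExp, coeff_X_mul, coeff_pderiv, xyzExp_add_single_one,
    xyzExp_apply_one]

end xyzExp

section KernelOfDerivation

variable {R : Type*} [CommRing R] {φ : MvPolynomial (Fin 3) R}

theorem coeff_X_two_mul_pderiv_one_eq (hφ : -(2 * X 1 * pderiv 0 φ) + X 2 * pderiv 1 φ = 0)
    (m : Fin 3 →₀ ℕ) : coeff m (X 2 * pderiv 1 φ) = 2 * coeff m (X 1 * pderiv 0 φ) := by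
  have h := congrArg (coeff m) hφ
  rw [mul_assoc, two_mul, coeff_add, coeff_neg, coeff_add, coeff_zero] at h
  linear_combination h

theorem coeff_xyzExp_recurrence (hφ : -(2 * X 1 * pderiv 0 φ) + X 2 * pderiv 1 φ = 0)
    (a b c : ℕ) :
    coeff (xyzExp a (b + 2) c) φ * (b + 2) =
      2 * (coeff (xyzExp (a + 1) b (c + 1)) φ * (a + 1)) := by
  have h := coeff_X_two_mul_pderiv_one_eq hφ (xyzExp a (b + 1) (c + 1))
  rw [coeff_xyzExp_X_one_mul_pderiv_zero, coeff_xyzExp_X_two_mul_pderiv_one] at h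
  push_cast at h
  linear_combination h

theorem coeff_xyzExp_one (hφ : -(2 * X 1 * pderiv 0 φ) + X 2 * pderiv 1 φ = 0) (a c : ℕ) :
    coeff (xyzExp a 1 c) φ = 0 := by
  have h := coeff_X_two_mul_pderiv_one_eq hφ (xyzExp a 0 (c + 1))
  rw [coeff_X_mul_of_apply_eq_zero _ (xyzExp_apply_one ..),
    coeff_xyzExp_X_two_mul_pderiv_one] at h
  simpa using h

theorem coeff_xyzExp_succ_zero [NoZeroDivisors R] [CharZero R]
    (hφ : -(2 * X 1 * pderiv 0 φ) + X 2 * pderiv 1 φ = 0) (a b : ℕ) :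
    coeff (xyzExp (a + 1) b 0) φ = 0 := by
  have h := coeff_X_two_mul_pderiv_one_eq hφ (xyzExp a (b + 1) 0)
  rw [coeff_X_mul_of_apply_eq_zero _ (xyzExp_apply_two ..),
    coeff_xyzExp_X_one_mul_pderiv_zero, eq_comm] at h
  simpa [Nat.cast_add_one_ne_zero] using h

theorem coeff_xyzExp_odd_diag [NoZeroDivisors R] [CharZero R]
    (hφ : -(2 * X 1 * pderiv 0 φ) + X 2 * pderiv 1 φ = 0) (i j : ℕ) :
    coeff (xyzExp j (2 * i + 1) j) φ = 0 := by
  induction i generalizing j with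
  | zero => exact coeff_xyzExp_one hφ j j
  | succ i ih =>
    have h := coeff_xyzExp_recurrence hφ j (2 * i + 1) j
    rw [ih, zero_mul, mul_zero] at h
    rw [show 2 * (i + 1) + 1 = 2 * i + 1 + 2 by ring]
    exact (mul_eq_zero.mp h).resolve_right (by norm_cast)

theorem coeff_eq_zero_of_apply_two_eq_zero [NoZeroDivisors R] [CharZero R]
    (hφ : -(2 * X 1 * pderiv 0 φ) + X 2 * pderiv 1 φ = 0) {n : ℕ}
    (hhom : φ.IsHomogeneous (2 * n + 1)) {m : Fin 3 →₀ ℕ} (hm : m 2 = 0) :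
    coeff m φ = 0 := by
  rw [← xyzExp_apply_self m, hm]
  rcases m 0 with _ | a
  · by_cases hb : m 1 = 2 * n + 1
    · simpa [hb] using coeff_xyzExp_odd_diag hφ n 0
    · exact hhom.coeff_eq_zero (by simpa using hb)
  · exact coeff_xyzExp_succ_zero hφ a (m 1)

theorem pde_of_X_two_mul [IsDomain R] {ψ : MvPolynomial (Fin 3) R}
    (hφ : -(2 * X 1 * pderiv 0 (X 2 * ψ)) + X 2 * pderiv 1 (X 2 * ψ) = 0) :
    -(2 * X 1 * pderiv 0 ψ) + X 2 * pderiv 1 ψ = 0 := by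
  have h : X 2 * (-(2 * X 1 * pderiv 0 ψ) + X 2 * pderiv 1 ψ) = 0 := by
    rw [pderiv_mul, pderiv_mul, pderiv_X_of_ne (by decide), pderiv_X_of_ne (by decide)] at hφ
    linear_combination hφ
  exact (mul_eq_zero.mp h).resolve_left (X_ne_zero 2)

end KernelOfDerivation

/-- A homogeneous solution of -2y φ_x + z φ_y = 0 of odd degree 2n+1 is z ψ, with ψ a
homogeneous solution of degree 2n. -/
theorem odd_degree_solution (F : Type*) [Field F] [CharZero F]
    (n : ℕ) (φ : MvPolynomial (Fin 3) F)
    (hhom : φ.IsHomogeneous (2 * n + 1))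
    (hpde : -(2 * X 1 * pderiv 0 φ) + X 2 * pderiv 1 φ = 0) :
    ∃ ψ : MvPolynomial (Fin 3) F,
      ψ.IsHomogeneous (2 * n) ∧
      -(2 * X 1 * pderiv 0 ψ) + X 2 * pderiv 1 ψ = 0 ∧
      φ = X 2 * ψ := by
  obtain ⟨ψ, rfl⟩ : X 2 ∣ φ :=
    X_dvd_of_forall_coeff_eq_zero fun m hm => coeff_eq_zero_of_apply_two_eq_zero hpde hhom hm
  exact ⟨ψ, hhom.of_X_mul, pde_of_X_two_mul hpde, rfl⟩
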